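/- arXiv:2009.00066 — 2 statements merged into one kernel-verified Lean document; each statement's English description precedes it below -/
import Mathlib

section
/- Let 0 < a < 1 and let g be a complete Riemannian metric on Ω_a = {z ∈ ℂ : a < |z| ≤ 1} conformal to the Euclidean metric (complete towards the inner boundary). Then the total area of Ω_a with respect to g is infinite: μ_g(Ω_a) = +∞. -/
open MeasureTheory Filter Set
open scoped ENNReal

noncomputable section

/-- The half-open annulus `{z : a < |z| ≤ 1}`. -/
def ann (a : ℝ) : Set ℂ := {z : ℂ | a < ‖z‖ ∧ ‖z‖ ≤ 1}

/-- Length of a curve `γ` with respect to the conformal metric with length weight `w`. -/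
def glen (w : ℂ → ℝ) (γ : ℝ → ℂ) : ℝ := ∫ t in (0:ℝ)..1, w (γ t) * ‖deriv γ t‖

/-- Extended length, on `[0,1)`. -/
def glenE (w : ℂ → ℝ) (γ : ℝ → ℂ) : ℝ≥0∞ :=
  ∫⁻ t in Set.Ico (0:ℝ) 1, ENNReal.ofReal (w (γ t) * ‖deriv γ t‖)

/-- A `1`-periodic piecewise-smooth loop with values in `S`. -/
def IsLoopIn (S : Set ℂ) (γ : ℝ → ℂ) : Prop :=
  ContDiff ℝ 1 γ ∧ (∀ t, γ t ∈ S) ∧ ∀ t, γ (t + 1) = γ t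

/-- The loop `γ` is null-homotopic inside `S` (through `1`-periodic free loops). -/
def NullHomotopicIn (S : Set ℂ) (γ : ℝ → ℂ) : Prop :=
  ∃ H : ℝ → ℝ → ℂ, Continuous (Function.uncurry H) ∧ (∀ s t, H s t ∈ S) ∧
    (∀ s t, H s (t + 1) = H s t) ∧ (∀ t, H 0 t = γ t) ∧ ∃ c, ∀ t, H 1 t = c

/-- Width: infimum of lengths of homotopically nontrivial loops in the annulus. -/
def gwidth (a : ℝ) (w : ℂ → ℝ) : ℝ :=
  sInf {L | ∃ γ : ℝ → ℂ, IsLoopIn (ann a) γ ∧ ¬ NullHomotopicIn (ann a) γ ∧ L = glen w γ}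

/-- Completeness towards the inner boundary: curves approaching `{|z| = a}` have infinite length. -/
def CompleteInner (a : ℝ) (w : ℂ → ℝ) : Prop :=
  ∀ γ : ℝ → ℂ, ContDiffOn ℝ 1 γ (Set.Ico (0:ℝ) 1) →
    (∀ t ∈ Set.Ico (0:ℝ) 1, γ t ∈ ann a) →
    Tendsto (fun t => ‖γ t‖) (nhdsWithin 1 (Set.Iio 1)) (nhds a) →
    glenE w γ = ⊤

/-- Flat Laplacian `∂²u/∂x² + ∂²u/∂y²` on `ℂ ≅ ℝ²`. -/
def lap (u : ℂ → ℝ) (z : ℂ) : ℝ :=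
  iteratedFDeriv ℝ 2 u z (fun _ => (1:ℂ)) + iteratedFDeriv ℝ 2 u z (fun _ => Complex.I)

/-- Distance between sets `A`, `B` within `S`, for the metric with length weight `w`. -/
def gdistS (S : Set ℂ) (w : ℂ → ℝ) (A B : Set ℂ) : ℝ :=
  sInf {L | ∃ γ : ℝ → ℂ, ContDiff ℝ 1 γ ∧ (∀ t ∈ Set.Icc (0:ℝ) 1, γ t ∈ S) ∧
    γ 0 ∈ A ∧ γ 1 ∈ B ∧ L = glen w γ}

/-- Euclidean Dirichlet energy over a plane domain. -/
def dirEnergy (Ω : Set ℂ) (u : ℂ → ℝ) : ℝ := ∫ z in Ω, ‖fderiv ℝ u z‖ ^ 2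

end

/-!
If the area `∫ e^{2u}` were finite, Tonelli's theorem would give a height `0 < y < a` at which
the horizontal slice `∫ e^{2u(x + iy)} dx` is finite. The horizontal segment at that height from
the unit circle to the circle `|z| = a` stays in the annulus, and since `e^u ≤ 1 + e^{2u}` its
`g`-length is bounded by its Euclidean length plus a multiple of that slice integral, so it is
finite, contradicting completeness.
-/

open Complex Topology

theorem measurableSet_ann (a : ℝ) : MeasurableSet (ann a) :=
  measurableSet_Ioc.preimage continuous_norm.measurable

theorem Real.exp_le_one_add_exp_two_mul (x : ℝ) : Real.exp x ≤ 1 + Real.exp (2 * x) := by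
  rw [mul_comm, Real.exp_mul, Real.rpow_two]
  nlinarith [sq_nonneg (Real.exp x - 1)]

theorem lintegral_comp_affine (f : ℝ → ℝ≥0∞) (c : ℝ) {d : ℝ} (hd : d ≠ 0) :
    ∫⁻ t, f (c + d * t) = ENNReal.ofReal |d⁻¹| * ∫⁻ x, f x := by
  calc ∫⁻ t, f (c + d * t)
      = ∫⁻ s, f (c + s) ∂(Measure.map (d * ·) volume) :=
        (lintegral_map_equiv (fun s => f (c + s)) (MeasurableEquiv.mulLeft₀ d hd)).symm
    _ = ENNReal.ofReal |d⁻¹| * ∫⁻ x, f x := by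
        rw [Real.map_volume_mul_left hd, lintegral_smul_measure, lintegral_add_left_eq_self,
          smul_eq_mul]

theorem ae_lintegral_horizontal_lt_top {f : ℂ → ℝ≥0∞} (hf : AEMeasurable f)
    (hfin : ∫⁻ z, f z ≠ ⊤) : ∀ᵐ y : ℝ, ∫⁻ x : ℝ, f (x + y * I) < ⊤ := by
  have hmp := volume_preserving_equiv_real_prod.symm
  have hf' : AEMeasurable (fun p => f (measurableEquivRealProd.symm p)) (volume.prod volume) :=
    hf.comp_quasiMeasurePreserving hmp.quasiMeasurePreserving
  rw [hmp.lintegral_map_equiv, Measure.volume_eq_prod, lintegral_prod_symm _ hf'] at hfin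
  simpa only [measurableEquivRealProd_symm_apply, mk_eq_add_mul_I]
    using ae_lt_top' hf'.lintegral_prod_left' hfin

def horizontalSegment (x₀ x₁ y : ℝ) (t : ℝ) : ℂ := ((x₀ + (x₁ - x₀) * t : ℝ) : ℂ) + y * I

section horizontalSegment

variable {x₀ x₁ y : ℝ}

theorem hasDerivAt_horizontalSegment (t : ℝ) :
    HasDerivAt (horizontalSegment x₀ x₁ y) ((x₁ - x₀ : ℝ) : ℂ) t := by
  have h : HasDerivAt (fun t : ℝ => x₀ + (x₁ - x₀) * t) (x₁ - x₀) t := by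
    simpa using ((hasDerivAt_id t).const_mul (x₁ - x₀)).const_add x₀
  exact h.ofReal_comp.add_const _

theorem contDiff_horizontalSegment : ContDiff ℝ 1 (horizontalSegment x₀ x₁ y) :=
  (ofRealCLM.contDiff.comp (contDiff_const.add (contDiff_const.mul contDiff_id))).add
    contDiff_const

theorem norm_horizontalSegment (t : ℝ) :
    ‖horizontalSegment x₀ x₁ y t‖ = √((x₀ + (x₁ - x₀) * t) ^ 2 + y ^ 2) :=
  norm_add_mul_I _ _

theorem tendsto_norm_horizontalSegment_one :
    Tendsto (fun t => ‖horizontalSegment x₀ x₁ y t‖) (𝓝[<] 1) (𝓝 √(x₁ ^ 2 + y ^ 2)) := by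
  have h := (contDiff_horizontalSegment (x₀ := x₀) (x₁ := x₁) (y := y)).continuous.norm.tendsto 1
  rw [norm_horizontalSegment, mul_one, add_sub_cancel] at h
  exact h.mono_left nhdsWithin_le_nhds

theorem glenE_horizontalSegment_ne_top {S : Set ℂ} {u : ℂ → ℝ} (hne : x₀ ≠ x₁)
    (hS : ∀ t ∈ Ico (0 : ℝ) 1, horizontalSegment x₀ x₁ y t ∈ S)
    (hslice : ∫⁻ x : ℝ, S.indicator (fun z => ENNReal.ofReal (Real.exp (2 * u z))) (x + y * I)
      ≠ ⊤) :
    glenE (fun z => Real.exp (u z)) (horizontalSegment x₀ x₁ y) ≠ ⊤ := by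
  set F := S.indicator (fun z => ENNReal.ofReal (Real.exp (2 * u z)))
  set γ := horizontalSegment x₀ x₁ y
  have hd : x₁ - x₀ ≠ 0 := sub_ne_zero.2 hne.symm
  have hpt : ∀ t ∈ Ico (0 : ℝ) 1,
      ENNReal.ofReal (Real.exp (u (γ t)) * ‖deriv γ t‖)
        ≤ ENNReal.ofReal |x₁ - x₀| * (1 + F (γ t)) := by
    intro t ht
    have hFγ : F (γ t) = ENNReal.ofReal (Real.exp (2 * u (γ t))) := indicator_of_mem (hS t ht) _
    rw [(hasDerivAt_horizontalSegment t).deriv, norm_real, Real.norm_eq_abs, hFγ,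
      ← ENNReal.ofReal_one, ← ENNReal.ofReal_add zero_le_one (Real.exp_pos _).le,
      ← ENNReal.ofReal_mul (abs_nonneg _), mul_comm]
    exact ENNReal.ofReal_le_ofReal (mul_le_mul_of_nonneg_left
      (Real.exp_le_one_add_exp_two_mul _) (abs_nonneg _))
  have hslice_comp : ∫⁻ t, F (γ t) = ENNReal.ofReal |(x₁ - x₀)⁻¹| * ∫⁻ x : ℝ, F (x + y * I) :=
    lintegral_comp_affine (fun x : ℝ => F (x + y * I)) x₀ hd
  apply ne_of_lt
  calc glenE (fun z => Real.exp (u z)) γ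
      ≤ ∫⁻ t in Ico (0 : ℝ) 1, ENNReal.ofReal |x₁ - x₀| * (1 + F (γ t)) :=
        setLIntegral_mono' measurableSet_Ico hpt
    _ ≤ ENNReal.ofReal |x₁ - x₀| * (1 + ∫⁻ t, F (γ t)) := by
        rw [lintegral_const_mul' _ _ ENNReal.ofReal_ne_top, lintegral_add_left measurable_const,
          setLIntegral_const, Real.volume_Ico, sub_zero, ENNReal.ofReal_one, one_mul]
        gcongr
        exact Measure.restrict_le_self
    _ < ⊤ := by rw [hslice_comp]; finiteness

end horizontalSegment

theorem horizontalSegment_mem_ann {a y : ℝ} (ha : 0 < a) (ha1 : a < 1) (hy : y ^ 2 < a ^ 2)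
    {t : ℝ} (ht : t ∈ Ico (0 : ℝ) 1) :
    horizontalSegment √(1 - y ^ 2) √(a ^ 2 - y ^ 2) y t ∈ ann a := by
  have hx₀ : √(1 - y ^ 2) ^ 2 = 1 - y ^ 2 := Real.sq_sqrt (by nlinarith)
  have hx₁ : √(a ^ 2 - y ^ 2) ^ 2 = a ^ 2 - y ^ 2 := Real.sq_sqrt (by nlinarith)
  have hlt : √(a ^ 2 - y ^ 2) < √(1 - y ^ 2) := Real.sqrt_lt_sqrt (by nlinarith) (by nlinarith)
  have hx₁0 := Real.sqrt_nonneg (a ^ 2 - y ^ 2)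
  obtain ⟨ht0, ht1⟩ := ht
  set x := √(1 - y ^ 2) + (√(a ^ 2 - y ^ 2) - √(1 - y ^ 2)) * t
  have hx_gt : √(a ^ 2 - y ^ 2) < x := by nlinarith
  have hx_le : x ≤ √(1 - y ^ 2) := by nlinarith
  show a < _ ∧ _ ≤ 1
  rw [norm_horizontalSegment, Real.lt_sqrt ha.le, Real.sqrt_le_one]
  constructor <;> nlinarith

/-- a conformal metric `g = e^{2u}|dz|²` on the half-open annulus
which is complete towards the inner boundary has infinite total area. -/
theorem stmt_4 (a : ℝ) (ha : 0 < a) (ha1 : a < 1)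
    (u : ℂ → ℝ) (hu : ContinuousOn u (ann a))
    (hcomp : CompleteInner a (fun z => Real.exp (u z))) :
    (∫⁻ z in ann a, ENNReal.ofReal (Real.exp (2 * u z))) = ⊤ := by
  by_contra hfin
  set F := (ann a).indicator (fun z => ENNReal.ofReal (Real.exp (2 * u z)))
  have hF : AEMeasurable F := (aemeasurable_indicator_iff (measurableSet_ann a)).2
    ((ENNReal.continuous_ofReal.comp_continuousOn
      (Real.continuous_exp.comp_continuousOn (continuousOn_const.mul hu))).aemeasurable
      (measurableSet_ann a))
  have hFfin : ∫⁻ z, F z ≠ ⊤ := by rwa [lintegral_indicator (measurableSet_ann a)]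
  obtain ⟨y, ⟨hy0, hya⟩, hslice⟩ := Measure.exists_mem_of_measure_ne_zero_of_ae (s := Ioo 0 a)
    (by simp [ha]) (ae_restrict_of_ae (ae_lintegral_horizontal_lt_top hF hFfin))
  have hy : y ^ 2 < a ^ 2 := by nlinarith
  have hmem := fun t (ht : t ∈ Ico (0 : ℝ) 1) => horizontalSegment_mem_ann ha ha1 hy ht
  have htend := tendsto_norm_horizontalSegment_one (x₀ := √(1 - y ^ 2)) (x₁ := √(a ^ 2 - y ^ 2))
    (y := y)
  rw [Real.sq_sqrt (by nlinarith), sub_add_cancel, Real.sqrt_sq ha.le] at htend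
  exact glenE_horizontalSegment_ne_top (Real.sqrt_lt_sqrt (by nlinarith) (by nlinarith)).ne' hmem
    hslice.ne (hcomp _ contDiff_horizontalSegment.contDiffOn hmem htend)
end

section
/- Let g be a metric on Ω_a = {z : a < |z| ≤ 1}, ε ∈ (0, 1-a) small, g̃ = |z|^{2λ}g, l_{1-ε} the g-length of the circle Γ_{1-ε} = {|z| = 1-ε}, and l_0(g) > 0 the width. If a minimizing sequence γ_k of homotopically nontrivial loops for the g̃-length satisfies Im γ_k ⊆ {z : 1 - ε/2 ≤ |z| ≤ 1} for infinitely many k, then λ ≤ log(l_{1-ε}/l_0) / (2 log((1-ε/2)/(1-ε))). -/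
open MeasureTheory Filter Set
open scoped ENNReal

/-!
Every loop of the minimizing sequence that stays in `{1 - ε/2 ≤ |z|}` has `g̃`-length at least
`(1 - ε/2)^{2λ}` times its `g`-length, hence at least `(1 - ε/2)^{2λ} l₀`; passing to the limit,
the `g̃`-width is at least this. The circle `Γ_{1-ε}` is a homotopically nontrivial competitor of
`g̃`-length `(1 - ε)^{2λ} l_{1-ε}`, so the `g̃`-width is at most that, and taking logarithms gives
the bound on `λ`. The circle is nontrivial because a free homotopy into `ℂ \ {0}` lifts through
`exp`, and the lift transports the increment `2πi` of the lift of the circle over one period to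
the lift of a constant loop, which has increment `0`.
-/

open Complex in
noncomputable def circleLoop (R : ℝ) : ℝ → ℂ := fun t => (R : ℂ) * exp (2 * Real.pi * I * (t : ℂ))

section CircleLoop

open Complex

theorem norm_circleLoop (R t : ℝ) : ‖circleLoop R t‖ = |R| := by
  rw [circleLoop, norm_mul, norm_real, Real.norm_eq_abs,
    show 2 * (Real.pi : ℂ) * I * (t : ℂ) = ((2 * Real.pi * t : ℝ) : ℂ) * I by push_cast; ring,
    norm_exp_ofReal_mul_I, mul_one]

theorem circleLoop_add_one (R t : ℝ) : circleLoop R (t + 1) = circleLoop R t := by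
  simp only [circleLoop, ofReal_add, ofReal_one, mul_add, mul_one, exp_add, exp_two_pi_mul_I]

theorem contDiff_circleLoop (R : ℝ) : ContDiff ℝ 1 (circleLoop R) := by
  have : ContDiff ℝ 1 fun t : ℝ => (t : ℂ) := ofRealCLM.contDiff
  unfold circleLoop
  fun_prop

theorem isLoopIn_ann_circleLoop {a R : ℝ} (haR : a < |R|) (hR : |R| ≤ 1) :
    IsLoopIn (ann a) (circleLoop R) :=
  ⟨contDiff_circleLoop R, fun t => by
    simp only [ann, Set.mem_ofPred_eq, norm_circleLoop]; exact ⟨haR, hR⟩, circleLoop_add_one R⟩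

theorem eq_of_exp_comp_eq {A : Type*} [TopologicalSpace A] [PreconnectedSpace A] {g₁ g₂ : A → ℂ}
    (h₁ : Continuous g₁) (h₂ : Continuous g₂) (he : ∀ x, exp (g₁ x) = exp (g₂ x)) (x : A)
    (hx : g₁ x = g₂ x) : g₁ = g₂ :=
  isCoveringMap_exp.eq_of_comp_eq h₁ h₂ (funext fun x => Subtype.ext (he x)) x hx

theorem not_nullHomotopicIn_circleLoop {S : Set ℂ} (hS : (0 : ℂ) ∉ S) (R : ℝ) :
    ¬ NullHomotopicIn S (circleLoop R) := by
  rintro ⟨H, hHc, hHS, hHper, hH0, c, hH1⟩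
  have hHne : ∀ s t, H s t ≠ 0 := fun s t h => hS (h ▸ hHS s t)
  obtain ⟨G, -, hG⟩ := (isCoveringMapOn_exp.existsUnique_continuousMap_lifts
    ⟨Function.uncurry H, hHc⟩ (a₀ := ((0 : ℝ), (0 : ℝ))) (exp_log (hHne 0 0))
    fun p => hHne p.1 p.2).exists
  have hexpG : ∀ s t, exp (G (s, t)) = H s t := fun s t => congrFun hG (s, t)
  have hwind₀ : G (0, 1) = G (0, 0) + 2 * Real.pi * I := by
    have hlift := eq_of_exp_comp_eq (g₁ := fun t => G (0, t))
      (g₂ := fun t => G (0, 0) + 2 * Real.pi * I * t) (by fun_prop) (by fun_prop)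
      (fun t => by
        rw [exp_add, hexpG, hexpG, hH0, hH0]
        simp [circleLoop]) 0 (by simp)
    simpa using congrFun hlift 1
  have hwind₁ : G (1, 1) = G (1, 0) + 2 * Real.pi * I := by
    have hlift := eq_of_exp_comp_eq (g₁ := fun p : ℝ × ℝ => G (p.1, p.2 + 1))
      (g₂ := fun p => G p + 2 * Real.pi * I) (by fun_prop) (by fun_prop)
      (fun p => by rw [exp_add, exp_two_pi_mul_I, mul_one, hexpG, hHper, ← hexpG])
      (0, 0) (by simpa using hwind₀)
    simpa using congrFun hlift (1, 0)
  have hconst : G (1, 1) = G (1, 0) :=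
    isCoveringMap_exp.const_of_comp (g := fun t => G (1, t)) (by fun_prop)
      (fun t t' => Subtype.ext (by simp only [hexpG, hH1])) 1 0
  rw [hconst, left_eq_add] at hwind₁
  exact two_pi_I_ne_zero hwind₁

end CircleLoop

section ConformalLength

variable {w ρ : ℂ → ℝ} {γ : ℝ → ℂ}

theorem glen_nonneg (hw : ∀ z, 0 ≤ w z) (γ : ℝ → ℂ) : 0 ≤ glen w γ :=
  intervalIntegral.integral_nonneg zero_le_one fun _ _ => mul_nonneg (hw _) (norm_nonneg _)

theorem glen_mul_of_forall_eq {c : ℝ} (h : ∀ t, ρ (γ t) = c) :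
    glen (fun z => ρ z * w z) γ = c * glen w γ := by
  simp only [glen, h, mul_assoc, intervalIntegral.integral_const_mul]

theorem mul_glen_le_glen_mul (hw : ∀ z, 0 ≤ w z) (hρ : Continuous fun t => ρ (γ t)) {c : ℝ}
    (hc : 0 ≤ c) (hcρ : ∀ t, c ≤ ρ (γ t)) : c * glen w γ ≤ glen (fun z => ρ z * w z) γ := by
  have hf : ∀ t, 0 ≤ w (γ t) * ‖deriv γ t‖ := fun t => mul_nonneg (hw _) (norm_nonneg _)
  by_cases hint : IntervalIntegrable (fun t => w (γ t) * ‖deriv γ t‖) MeasureTheory.volume 0 1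
  · rw [glen, ← intervalIntegral.integral_const_mul]
    simp only [glen, mul_assoc]
    exact intervalIntegral.integral_mono_on zero_le_one (hint.const_mul c)
      (hint.continuousOn_mul hρ.continuousOn) fun t _ => mul_le_mul_of_nonneg_right (hcρ t) (hf t)
  · rw [glen, intervalIntegral.integral_undef hint, mul_zero]
    exact intervalIntegral.integral_nonneg zero_le_one fun t _ =>
      mul_nonneg (mul_nonneg (hc.trans (hcρ t)) (hw _)) (norm_nonneg _)

theorem gwidth_le_glen (a : ℝ) (hw : ∀ z, 0 ≤ w z) (hγ : IsLoopIn (ann a) γ)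
    (hγ' : ¬ NullHomotopicIn (ann a) γ) : gwidth a w ≤ glen w γ :=
  csInf_le ⟨0, by rintro _ ⟨γ, -, -, rfl⟩; exact glen_nonneg hw γ⟩ ⟨γ, hγ, hγ', rfl⟩

theorem gwidth_rpow_mul_le_rpow_mul_glen_circleLoop {a : ℝ} (ha : 0 ≤ a) (hw : ∀ z, 0 ≤ w z)
    {R : ℝ} (haR : a < |R|) (hR : |R| ≤ 1) (p : ℝ) :
    gwidth a (fun z => ‖z‖ ^ p * w z) ≤ |R| ^ p * glen w (circleLoop R) := by
  rw [← glen_mul_of_forall_eq (ρ := fun z => ‖z‖ ^ p) fun t => by rw [norm_circleLoop]]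
  refine gwidth_le_glen a (fun z => mul_nonneg (Real.rpow_nonneg (norm_nonneg z) p) (hw z))
    (isLoopIn_ann_circleLoop haR hR) (not_nullHomotopicIn_circleLoop ?_ R)
  simp only [ann, Set.mem_ofPred_eq, norm_zero, not_and, not_le]
  intro h; linarith

theorem rpow_mul_gwidth_le_glen {a : ℝ} (hw : ∀ z, 0 ≤ w z) (hγ : IsLoopIn (ann a) γ)
    (hγ' : ¬ NullHomotopicIn (ann a) γ) {r p : ℝ} (hr : 0 ≤ r) (hp : 0 ≤ p)
    (hrγ : ∀ t, r ≤ ‖γ t‖) : r ^ p * gwidth a w ≤ glen (fun z => ‖z‖ ^ p * w z) γ :=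
  (mul_le_mul_of_nonneg_left (gwidth_le_glen a hw hγ hγ') (Real.rpow_nonneg hr p)).trans <|
    mul_glen_le_glen_mul hw ((Real.continuous_rpow_const hp).comp hγ.1.continuous.norm)
      (Real.rpow_nonneg hr p) fun t => Real.rpow_le_rpow hr (hrγ t) hp

end ConformalLength

theorem le_log_div_log_of_rpow_mul_le {r₁ r₂ l₀ l₁ p : ℝ} (hr₂ : 0 < r₂) (hr : r₂ < r₁)
    (hl₀ : 0 < l₀) (h : r₁ ^ p * l₀ ≤ r₂ ^ p * l₁) :
    p ≤ Real.log (l₁ / l₀) / Real.log (r₁ / r₂) := by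
  have hr₁ : 0 < r₁ := hr₂.trans hr
  have hratio : (r₁ / r₂) ^ p ≤ l₁ / l₀ := by
    rw [Real.div_rpow hr₁.le hr₂.le, div_le_div_iff₀ (Real.rpow_pos_of_pos hr₂ p) hl₀]
    linarith
  rw [le_div_iff₀ (Real.log_pos ((one_lt_div hr₂).2 hr)), ← Real.log_rpow (div_pos hr₁ hr₂)]
  exact Real.log_le_log (Real.rpow_pos_of_pos (div_pos hr₁ hr₂) p) hratio

theorem stmt_7_general (a ε lam : ℝ) (ha : 0 < a) (hε : 0 < ε) (haε : a < 1 - ε)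
    (hlam : 0 < lam) (u : ℂ → ℝ)
    (hl0 : 0 < gwidth a (fun z => Real.exp (u z)))
    (l1ε : ℝ)
    (hl1ε : l1ε = glen (fun z => Real.exp (u z))
      (fun t => ((1 - ε : ℝ) : ℂ) * Complex.exp (2 * Real.pi * Complex.I * (t : ℂ))))
    (γ : ℕ → ℝ → ℂ)
    (hloop : ∀ k, IsLoopIn (ann a) (γ k) ∧ ¬ NullHomotopicIn (ann a) (γ k))
    (hmin : Tendsto
      (fun k => glen (fun z => ‖z‖ ^ (2 * lam) * Real.exp (u z)) (γ k)) atTop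
      (nhds (gwidth a (fun z => ‖z‖ ^ (2 * lam) * Real.exp (u z)))))
    (hin : ∃ᶠ k in atTop, ∀ t, 1 - ε / 2 ≤ ‖γ k t‖) :
    lam ≤ Real.log (l1ε / gwidth a (fun z => Real.exp (u z))) /
      (2 * Real.log ((1 - ε / 2) / (1 - ε))) := by
  have hw : ∀ z, 0 ≤ Real.exp (u z) := fun z => (Real.exp_pos _).le
  have hR : |1 - ε| = 1 - ε := abs_of_pos (ha.trans haε)
  have hlower : (1 - ε / 2) ^ (2 * lam) * gwidth a (fun z => Real.exp (u z)) ≤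
      gwidth a (fun z => ‖z‖ ^ (2 * lam) * Real.exp (u z)) :=
    ge_of_tendsto_of_frequently hmin <| hin.mono fun k hk =>
      rpow_mul_gwidth_le_glen hw (hloop k).1 (hloop k).2 (by linarith) (by positivity) hk
  have hupper : gwidth a (fun z => ‖z‖ ^ (2 * lam) * Real.exp (u z)) ≤
      (1 - ε) ^ (2 * lam) * l1ε := by
    have := gwidth_rpow_mul_le_rpow_mul_glen_circleLoop ha.le hw (R := 1 - ε) (by rwa [hR])
      (by rw [hR]; linarith) (2 * lam)
    rw [hl1ε]
    rwa [hR] at this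
  rw [div_mul_eq_div_div_swap, le_div_iff₀ two_pos, mul_comm]
  exact le_log_div_log_of_rpow_mul_le (by linarith) (by linarith) hl0 (hlower.trans hupper)

/-- if a minimizing sequence of homotopically nontrivial loops for the
`g̃ = |z|^{2λ}g`-length stays in `{1 - ε/2 ≤ |z| ≤ 1}` for infinitely many `k`,
then `λ ≤ log(l_{1-ε}/l₀) / (2 log((1-ε/2)/(1-ε)))`. -/
theorem stmt_7 (a ε lam : ℝ) (ha : 0 < a) (hε : 0 < ε) (hε1 : ε < 1) (haε : a < 1 - ε)
    (hlam : 0 < lam) (u : ℂ → ℝ)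
    (hl0 : 0 < gwidth a (fun z => Real.exp (u z)))
    (l1ε : ℝ)
    (hl1ε : l1ε = glen (fun z => Real.exp (u z))
      (fun t => ((1 - ε : ℝ) : ℂ) * Complex.exp (2 * Real.pi * Complex.I * (t : ℂ))))
    (γ : ℕ → ℝ → ℂ)
    (hloop : ∀ k, IsLoopIn (ann a) (γ k) ∧ ¬ NullHomotopicIn (ann a) (γ k))
    (hmin : Tendsto
      (fun k => glen (fun z => ‖z‖ ^ (2 * lam) * Real.exp (u z)) (γ k)) atTop
      (nhds (gwidth a (fun z => ‖z‖ ^ (2 * lam) * Real.exp (u z)))))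
    (hin : ∃ᶠ k in atTop, ∀ t, 1 - ε / 2 ≤ ‖γ k t‖) :
    lam ≤ Real.log (l1ε / gwidth a (fun z => Real.exp (u z))) /
      (2 * Real.log ((1 - ε / 2) / (1 - ε))) :=
  stmt_7_general a ε lam ha hε haε hlam u hl0 l1ε hl1ε γ hloop hmin hin
end
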